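/- Fix $n \ge 1$ and a nonzero composition $\mu \in \mathbb{N}^n$. Define recursively $c_{m} := s_{m-1}\cdots s_1 t_{-e_1} \in W = S_n \ltimes \mathbb{Z}^n$, acting on $\mathbb{Z}^n$ by $\lambda \mapsto (\lambda_2,\ldots,\lambda_m,\lambda_1 - 1,\lambda_{m+1},\ldots,\lambda_n)$. Let $d = |\mu|$ and let $m_1 \le m_2 \le \cdots \le m_d$ be the sequence such that applying the recursion $\mu \mapsto \mu^* = (\mu_m - 1, \mu_1, \ldots, \mu_{m-1}, 0,\ldots,0)$ with $m = l(\mu)$ repeatedly from $\mu$ down to $0$ uses lengths $m_d \ge \cdots \ge m_1$ in order. Then $c_{m_d} c_{m_{d-1}} \cdots c_{m_1}$ is a reduced decomposition of $m_{-\mu}$, the shortest element of the coset $t_{-\mu}S_n$ in $W$; in particular $\ell(m_{-\mu}) = \sum_{k=1}^d \ell(c_{m_k})$. -/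

import Mathlib

/-- An element `t_τ ∘ u` of the extended affine Weyl group `W = Sₙ ⋉ ℤⁿ`
of type `A_{n-1}`:  `perm` is the finite part `u ∈ Sₙ`, `tr` the translation `τ`. -/
structure AffW (n : ℕ) where
  perm : Equiv.Perm (Fin n)
  tr : Fin n → ℤ

namespace AffW

variable {n : ℕ}

/-- The affine action on `X = ℤⁿ` : `(t_τ u)(x) = u·x + τ` where `(u·x)_i = x_{u⁻¹ i}`. -/
def act (w : AffW n) (x : Fin n → ℤ) : Fin n → ℤ :=
  fun i => x (w.perm⁻¹ i) + w.tr i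

/-- Group multiplication (composition of affine maps). -/
def mul (a b : AffW n) : AffW n :=
  ⟨a.perm * b.perm, fun i => b.tr (a.perm⁻¹ i) + a.tr i⟩

def one (n : ℕ) : AffW n := ⟨1, 0⟩

/-- An affine root `ε_i - ε_j + k`, recorded as the data `(i, j, k)`. -/
abbrev Root (n : ℕ) := Fin n × Fin n × ℤ

/-- A positive affine root: `Δ⁺ = Δ_f⁺ ∪ (Δ_f + ℤ_{>0})`. -/
def IsPos (α : Root n) : Prop := 0 < α.2.2 ∨ (α.2.2 = 0 ∧ α.1 < α.2.1)

/-- A negative affine root. -/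
def IsNeg (α : Root n) : Prop := IsPos (α.2.1, α.1, -α.2.2)

/-- Action of `w` on affine roots, determined by `(wα)(x) = α(w⁻¹x)`. -/
def rootAct (w : AffW n) (α : Root n) : Root n :=
  (w.perm α.1, w.perm α.2.1, α.2.2 - w.tr (w.perm α.1) + w.tr (w.perm α.2.1))

/-- The length `ℓ(w) = #{α ∈ Δ⁺ ∣ wα ∈ -Δ⁺}`. -/
noncomputable def len (w : AffW n) : ℕ :=
  Set.ncard {α : Root n | IsPos α ∧ IsNeg (rootAct w α)}

/-- The affine reflection `s_{ε_i - ε_j + k}` as an element of `W`. -/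
def refl (i j : Fin n) (k : ℤ) : AffW n :=
  ⟨Equiv.swap i j, fun m => if m = i then -k else if m = j then k else 0⟩

/-- Bruhat covering-type relation: right multiplication by a reflection which
increases the length. -/
def BruhatStep (a b : AffW n) : Prop :=
  (∃ i j k, i ≠ j ∧ b = mul a (refl i j k)) ∧ len a < len b

/-- The Bruhat order on the extended affine Weyl group. -/
def BruhatLe : AffW n → AffW n → Prop := Relation.ReflTransGen BruhatStep

/-- `m_τ`, the shortest element of the coset `t_τ Sₙ`. -/
noncomputable def minRep (τ : Fin n → ℤ) : AffW n :=
  ⟨(Finset.exists_min_image (Finset.univ : Finset (Equiv.Perm (Fin n)))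
      (fun u => len (⟨u, τ⟩ : AffW n)) ⟨1, Finset.mem_univ 1⟩).choose, τ⟩

/-- The Bruhat order on `X = ℤⁿ` induced from the extended affine Weyl group:
`τ ≤ η ↔ m_τ ≤ m_η`. -/
noncomputable def XLe (τ η : Fin n → ℤ) : Prop := BruhatLe (minRep τ) (minRep η)

end AffW

namespace AffW

/-- The element `c_m = s_{m-1} ⋯ s_1 t_{-e_1}` of `W = Sₙ ⋉ ℤⁿ`, acting by
`λ ↦ (λ₂, …, λ_m, λ₁ - 1, λ_{m+1}, …, λₙ)` (for `1 ≤ m ≤ n`; junk `1`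
otherwise). -/
noncomputable def cElt (n m : ℕ) : AffW n :=
  if h : 1 ≤ m ∧ m ≤ n then
    ⟨(Fin.cycleRange (⟨m - 1, by omega⟩ : Fin n))⁻¹,
      fun i => if (i : ℕ) = m - 1 then -1 else 0⟩
  else one n

end AffW

/-!
Length is subadditive: an inversion of `a * b` is an inversion of `b` or the `b`-preimage of an
inversion of `a`. Hence `ℓ(c_{m_d} ⋯ c_{m_1}) ≤ ∑ ℓ(c_{m_k}) = ∑ (n - m_k)`. Counting inversions
pair by pair, every element of `t_{-ν} Sₙ` has length at least
`minLen ν = ∑_{p < q} min_{ε ∈ {0,1}} |ν_q - ν_p - ε|`, and `minLen ν = (n - m) + minLen ν*` for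
`m = l(ν)`: the cycle carrying `ν` to `ν*` preserves the contribution of every pair except the
`n - m` pairs `(m, q)` with `q > m`, each of which loses one. Telescoping, `∑ (n - m_k) = minLen μ`,
while the product has translation part `-μ`, so all these quantities coincide.
-/

theorem Fintype.sum_sum_eq_sum_sum_lt_add_sum_diag {ι M : Type*} [Fintype ι] [LinearOrder ι]
    [AddCommMonoid M] (H : ι → ι → M) :
    ∑ p, ∑ q, H p q = ∑ p, ∑ q, (if p < q then H p q + H q p else 0) + ∑ p, H p p := by
  have hsplit : ∀ p q, H p q =
      ((if p < q then H p q else 0) + if q < p then H p q else 0) + if p = q then H p q else 0 := by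
    intro p q
    rcases lt_trichotomy p q with h | rfl | h
    · simp [h, h.ne, h.not_gt]
    · simp
    · simp [h, h.ne', h.not_gt]
  calc ∑ p, ∑ q, H p q
      = (∑ p, ∑ q, if p < q then H p q else 0) + (∑ p, ∑ q, if q < p then H p q else 0)
          + ∑ p, ∑ q, if p = q then H p q else 0 := by
        simp only [← Finset.sum_add_distrib, ← hsplit]
    _ = (∑ p, ∑ q, if p < q then H p q else 0) + (∑ p, ∑ q, if p < q then H q p else 0)
          + ∑ p, H p p := by
        rw [Finset.sum_comm (f := fun p q => if q < p then H p q else 0)]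
        simp only [Finset.sum_ite_eq, Finset.mem_univ, if_true]
    _ = _ := by simp only [ite_add_zero, Finset.sum_add_distrib]

lemma Fin.coe_cycleRange {n : ℕ} (j x : Fin n) :
    (Fin.cycleRange j x : ℕ) = if x < j then (x : ℕ) + 1 else if x = j then 0 else (x : ℕ) := by
  rcases lt_trichotomy x j with h | rfl | h
  · rw [Fin.coe_cycleRange_of_lt h, if_pos h]
  · rw [Fin.coe_cycleRange_of_le le_rfl]
    simp
  · rw [Fin.cycleRange_of_gt h, if_neg h.not_gt, if_neg h.ne']

lemma Fin.cycleRange_lt_cycleRange_iff {n : ℕ} {j p q : Fin n} (hp : p ≠ j) (hq : q ≠ j) :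
    Fin.cycleRange j p < Fin.cycleRange j q ↔ p < q := by
  rw [Fin.lt_def, Fin.lt_def, Fin.coe_cycleRange, Fin.coe_cycleRange]
  simp only [hp, hq, if_false, Fin.lt_def]
  split_ifs <;> omega

lemma Fin.sum_sum_ite_eq_and_lt {n : ℕ} (j : Fin n) :
    ∑ p : Fin n, ∑ q : Fin n, (if p = j ∧ j < q then 1 else 0) = n - (j + 1) := by
  simp only [ite_and, Finset.sum_ite_irrel, Finset.sum_const_zero, Finset.sum_ite_eq',
    Finset.mem_univ, if_true, Finset.sum_boole, Nat.cast_id, Finset.filter_lt_eq_Ioi,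
    Fin.card_Ioi]
  omega

namespace AffW

variable {n : ℕ}

def invSet (w : AffW n) : Set (Root n) := {α | IsPos α ∧ IsNeg (rootAct w α)}

lemma invSet_eq_image (u : Equiv.Perm (Fin n)) (τ : Fin n → ℤ) :
    invSet ⟨u, τ⟩ = ((Finset.univ.sigma fun p : Fin n × Fin n =>
        Finset.Ico (if u⁻¹ p.1 < u⁻¹ p.2 then 0 else 1)
          (τ p.1 - τ p.2 + if p.2 < p.1 then 1 else 0)).image
      fun x => ((u⁻¹ x.1.1, u⁻¹ x.1.2, x.2) : Root n) : Set (Root n)) := by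
  ext ⟨i, j, k⟩
  simp only [invSet, IsPos, IsNeg, rootAct, Set.mem_ofPred_eq, Finset.coe_image, Set.mem_image,
    Finset.mem_coe, Finset.mem_sigma, Finset.mem_univ, Finset.mem_Ico, true_and, Sigma.exists,
    Prod.exists, Prod.mk.injEq]
  constructor
  · rintro ⟨hpos, hneg⟩
    refine ⟨u i, u j, k, ⟨?_, ?_⟩, by simp, by simp, rfl⟩
    · simp only [Equiv.Perm.coe_inv, Equiv.symm_apply_apply]
      split_ifs <;> omega
    · split_ifs <;> omega
  · rintro ⟨p, q, k, ⟨hlo, hhi⟩, rfl, rfl, rfl⟩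
    simp only [Equiv.Perm.coe_inv, Equiv.apply_symm_apply] at *
    constructor <;> split_ifs at hlo hhi <;> omega

lemma invSet_finite (w : AffW n) : (invSet w).Finite := by
  obtain ⟨u, τ⟩ := w
  rw [invSet_eq_image]
  exact Finset.finite_toSet _

lemma len_mk (u : Equiv.Perm (Fin n)) (τ : Fin n → ℤ) :
    len ⟨u, τ⟩ = ∑ p : Fin n × Fin n,
      (τ p.1 - τ p.2 + (if p.2 < p.1 then 1 else 0) - if u⁻¹ p.1 < u⁻¹ p.2 then 0 else 1).toNat := by
  change (invSet _).ncard = _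
  rw [invSet_eq_image, Set.ncard_coe_finset, Finset.card_image_of_injective, Finset.card_sigma]
  · simp only [Int.card_Ico]
  · rintro ⟨⟨p, q⟩, k⟩ ⟨⟨p', q'⟩, k'⟩ h
    simp only [Prod.mk.injEq, EmbeddingLike.apply_eq_iff_eq] at h
    obtain ⟨rfl, rfl, rfl⟩ := h
    rfl

lemma len_mk_eq_sum_lt (u : Equiv.Perm (Fin n)) (τ : Fin n → ℤ) :
    len ⟨u, τ⟩ = ∑ p, ∑ q,
      if p < q then (τ p - τ q - if u⁻¹ q < u⁻¹ p then 1 else 0).natAbs else 0 := by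
  rw [len_mk, Fintype.sum_prod_type, Fintype.sum_sum_eq_sum_sum_lt_add_sum_diag]
  have hdiag : ∀ p : Fin n,
      (τ p - τ p + (if p < p then 1 else 0) - if u⁻¹ p < u⁻¹ p then 0 else 1).toNat = 0 := by
    simp
  simp only [hdiag, Finset.sum_const_zero, add_zero]
  refine Finset.sum_congr rfl fun p _ => Finset.sum_congr rfl fun q _ => ?_
  by_cases hpq : p < q
  · have hne : u⁻¹ p ≠ u⁻¹ q := (u⁻¹).injective.ne hpq.ne
    simp only [hpq, hpq.not_gt, if_true, if_false]
    rcases hne.lt_or_gt with h | h <;> simp only [h, h.not_gt, if_true, if_false] <;> omega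
  · simp only [hpq, if_false]

lemma len_one : len (one n) = 0 := by
  rw [one, len_mk_eq_sum_lt]
  refine Finset.sum_eq_zero fun p _ => Finset.sum_eq_zero fun q _ => ?_
  split_ifs <;> simp_all [lt_asymm]

lemma rootAct_mul (a b : AffW n) (α : Root n) :
    rootAct (mul a b) α = rootAct a (rootAct b α) := by
  obtain ⟨i, j, k⟩ := α
  simp only [rootAct, mul, Equiv.Perm.mul_apply, Equiv.Perm.coe_inv, Equiv.symm_apply_apply,
    Prod.mk.injEq, true_and]
  ring

lemma rootAct_bijective (w : AffW n) : Function.Bijective (rootAct w) := by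
  refine ⟨fun ⟨i, j, k⟩ ⟨i', j', k'⟩ h => ?_, fun ⟨i, j, k⟩ => ?_⟩
  · simp only [rootAct, Prod.mk.injEq, EmbeddingLike.apply_eq_iff_eq] at h
    obtain ⟨rfl, rfl, h⟩ := h
    simp only [Prod.mk.injEq, true_and]
    omega
  · refine ⟨(w.perm⁻¹ i, w.perm⁻¹ j, k + w.tr i - w.tr j), ?_⟩
    simp only [rootAct, Equiv.Perm.coe_inv, Equiv.apply_symm_apply, Prod.mk.injEq, true_and]
    ring

lemma isPos_or_isNeg_rootAct (w : AffW n) {α : Root n} (hα : IsPos α) :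
    IsPos (rootAct w α) ∨ IsNeg (rootAct w α) := by
  obtain ⟨i, j, k⟩ := α
  simp only [IsPos, IsNeg, rootAct] at hα ⊢
  rcases eq_or_ne i j with rfl | hij
  · simp only [lt_self_iff_false, and_false, or_false] at hα ⊢
    omega
  · rcases (w.perm.injective.ne hij).lt_or_gt with h | h <;>
      simp only [h, h.not_gt, and_true, and_false, or_false] <;> omega

lemma invSet_mul_subset (a b : AffW n) :
    invSet (mul a b) ⊆ invSet b ∪ rootAct b ⁻¹' invSet a := by
  rintro α ⟨hpos, hneg⟩
  rw [rootAct_mul] at hneg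
  rcases isPos_or_isNeg_rootAct b hpos with h | h
  · exact Or.inr ⟨h, hneg⟩
  · exact Or.inl ⟨hpos, h⟩

lemma len_mul_le (a b : AffW n) : len (mul a b) ≤ len a + len b := by
  have hfin : (invSet b ∪ rootAct b ⁻¹' invSet a).Finite :=
    (invSet_finite b).union ((invSet_finite a).preimage (rootAct_bijective b).injective.injOn)
  calc len (mul a b) ≤ (invSet b ∪ rootAct b ⁻¹' invSet a).ncard :=
        Set.ncard_le_ncard (invSet_mul_subset a b) hfin
    _ ≤ len b + (rootAct b ⁻¹' invSet a).ncard := Set.ncard_union_le _ _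
    _ = len a + len b := by
        rw [Set.ncard_preimage_of_injective_subset_range (rootAct_bijective b).injective
          (by simp [(rootAct_bijective b).surjective.range_eq]), add_comm]
        rfl

lemma len_foldr_mul_le (l : List (AffW n)) : len (l.foldr mul (one n)) ≤ (l.map len).sum := by
  induction l with
  | nil => simp [len_one]
  | cons a l ih =>
    simp only [List.foldr_cons, List.map_cons, List.sum_cons]
    exact (len_mul_le a _).trans (by omega)

lemma cElt_val_add_one (j : Fin n) :
    cElt n (j + 1) = ⟨(Fin.cycleRange j)⁻¹, fun i => if i = j then -1 else 0⟩ := by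
  rw [cElt, dif_pos ⟨by omega, j.isLt⟩]
  simp [Fin.ext_iff]

lemma len_cElt_val_add_one (j : Fin n) : len (cElt n (j + 1)) = n - (j + 1) := by
  have hterm : ∀ p q : Fin n,
      (if p < q then ((if p = j then -1 else 0) - (if q = j then -1 else 0)
        - if Fin.cycleRange j q < Fin.cycleRange j p then 1 else 0 : ℤ).natAbs else 0)
        = if p = j ∧ j < q then 1 else 0 := by
    intro p q
    simp only [Fin.lt_def, Fin.coe_cycleRange, Fin.ext_iff]
    split_ifs <;> omega
  rw [cElt_val_add_one, len_mk_eq_sum_lt, inv_inv]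
  simp only [hterm]
  exact Fin.sum_sum_ite_eq_and_lt j

/-- The least value, over `ε ∈ {0, 1}`, of the `(p, q)` term `|f q - f p - ε|` of
`len_mk_eq_sum_lt` at `τ = -f`. -/
def pairCost (f : Fin n → ℕ) (p q : Fin n) : ℕ :=
  if p < q then (if f p < f q then f q - f p - 1 else f p - f q) else 0

def minLen (f : Fin n → ℕ) : ℕ := ∑ p, ∑ q, pairCost f p q

lemma minLen_le_len (u : Equiv.Perm (Fin n)) (f : Fin n → ℕ) :
    minLen f ≤ len ⟨u, fun i => -(f i : ℤ)⟩ := by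
  rw [len_mk_eq_sum_lt]
  refine Finset.sum_le_sum fun p _ => Finset.sum_le_sum fun q _ => ?_
  unfold pairCost
  split_ifs <;> omega

lemma minLen_zero : minLen (0 : Fin n → ℕ) = 0 := by
  simp [minLen, pairCost]

lemma two_mul_minLen (f : Fin n → ℕ) :
    2 * minLen f = ∑ p, ∑ q, (pairCost f p q + pairCost f q p) := by
  rw [two_mul]
  nth_rw 2 [minLen]
  rw [Finset.sum_comm]
  simp only [minLen, ← Finset.sum_add_distrib]

lemma pairCost_add_pairCost_cycleRange {j : Fin n} {ν ν' : Fin n → ℕ} (hj : ν j ≠ 0)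
    (hzero : ∀ i, j < i → ν i = 0)
    (hrot : ∀ x, ν' (Fin.cycleRange j x) = if x = j then ν j - 1 else ν x) (p q : Fin n) :
    pairCost ν p q + pairCost ν q p =
      pairCost ν' (Fin.cycleRange j p) (Fin.cycleRange j q) +
        pairCost ν' (Fin.cycleRange j q) (Fin.cycleRange j p) +
        (if p = j ∧ j < q then 1 else 0) + (if q = j ∧ j < p then 1 else 0) := by
  have hj_lt : ∀ x, x ≠ j → Fin.cycleRange j j < Fin.cycleRange j x := by
    intro x hx
    simp only [Fin.lt_def, Fin.coe_cycleRange, lt_self_iff_false, if_true, if_false, hx]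
    split_ifs <;> omega
  have key : ∀ x, x ≠ j → pairCost ν j x + pairCost ν x j =
      pairCost ν' (Fin.cycleRange j j) (Fin.cycleRange j x) +
        pairCost ν' (Fin.cycleRange j x) (Fin.cycleRange j j) + if j < x then 1 else 0 := by
    intro x hx
    have hσ := hj_lt x hx
    simp only [pairCost, hrot, hσ, hσ.not_gt, hx, if_true, if_false]
    rcases hx.lt_or_gt with h | h
    · simp only [h, h.not_gt, if_true, if_false]
      split_ifs <;> omega
    · simp only [h, h.not_gt, hzero x h, if_true, if_false]
      split_ifs <;> omega
  by_cases hp : p = j <;> by_cases hq : q = j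
  · subst hp hq
    simp [pairCost]
  · subst hp
    simpa [hq] using key q hq
  · subst hq
    simpa [hp, add_comm] using key p hp
  · simp only [pairCost, hrot, Fin.cycleRange_lt_cycleRange_iff hp hq,
      Fin.cycleRange_lt_cycleRange_iff hq hp, hp, hq, if_false, false_and, add_zero]

/-- `ν' = ν*`, where `l(ν) = m = j + 1` (positions are counted from `0`). -/
def StarStep (m : ℕ) (ν ν' : Fin n → ℕ) : Prop :=
  ∃ j : Fin n, (j : ℕ) + 1 = m ∧ ν j ≠ 0 ∧ (∀ i, j < i → ν i = 0) ∧
    ∀ x, ν' (Fin.cycleRange j x) = if x = j then ν j - 1 else ν x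

lemma starStep_of_forall_eq_ite {m : ℕ} {ν ν' : Fin n → ℕ} (hm1 : 1 ≤ m) (hmn : m ≤ n)
    (hlast : ν ⟨m - 1, by omega⟩ ≠ 0) (hzero : ∀ i : Fin n, m ≤ (i : ℕ) → ν i = 0)
    (hν' : ∀ i : Fin n, ν' i =
      if (i : ℕ) = 0 then ν ⟨m - 1, by omega⟩ - 1
      else if (i : ℕ) < m then ν ⟨(i : ℕ) - 1, lt_of_le_of_lt (Nat.sub_le _ _) i.isLt⟩
      else 0) :
    StarStep m ν ν' := by
  refine ⟨⟨m - 1, by omega⟩, by simp only; omega, hlast,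
    fun i hi => hzero i (by rw [Fin.lt_def] at hi; simp only at hi; omega), fun x => ?_⟩
  rw [hν']
  rcases lt_trichotomy x ⟨m - 1, by omega⟩ with h | rfl | h
  · rw [if_neg h.ne]
    have hx := Fin.coe_cycleRange_of_lt h
    rw [Fin.lt_def] at h
    simp only [hx, Nat.add_sub_cancel, if_false, Nat.add_one_ne_zero]
    rw [if_pos (by simp only at h; omega)]
  · simp [Fin.coe_cycleRange_of_le le_rfl]
  · rw [Fin.cycleRange_of_gt h, if_neg h.ne', eq_comm]
    rw [Fin.lt_def] at h
    simp only at h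
    rw [if_neg (by omega), if_neg (by omega)]
    exact hzero x (by omega)

lemma StarStep.len_cElt {m : ℕ} {ν ν' : Fin n → ℕ} (h : StarStep m ν ν') :
    len (cElt n m) = n - m := by
  obtain ⟨j, rfl, -⟩ := h
  exact len_cElt_val_add_one j

lemma StarStep.tr_mul_cElt {m : ℕ} {ν ν' : Fin n → ℕ} (h : StarStep m ν ν') {w : AffW n}
    (hw : w.tr = fun i => -(ν' i : ℤ)) : (mul (cElt n m) w).tr = fun i => -(ν i : ℤ) := by
  obtain ⟨j, rfl, hj, -, hrot⟩ := h
  funext i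
  simp only [mul, cElt_val_add_one, inv_inv, hw, hrot]
  split_ifs with hij
  · subst hij
    omega
  · simp

lemma StarStep.minLen_eq {m : ℕ} {ν ν' : Fin n → ℕ} (h : StarStep m ν ν') :
    minLen ν = (n - m) + minLen ν' := by
  obtain ⟨j, rfl, hj, hzero, hrot⟩ := h
  have hcount : ∑ p : Fin n, ∑ q : Fin n, (if q = j ∧ j < p then 1 else 0) = n - (j + 1) := by
    rw [Finset.sum_comm]
    exact Fin.sum_sum_ite_eq_and_lt j
  have hν' : 2 * minLen ν' = ∑ p, ∑ q, (pairCost ν' (Fin.cycleRange j p) (Fin.cycleRange j q) +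
      pairCost ν' (Fin.cycleRange j q) (Fin.cycleRange j p)) := by
    rw [two_mul_minLen, ← Equiv.sum_comp (Fin.cycleRange j)]
    exact Finset.sum_congr rfl fun p _ => (Equiv.sum_comp (Fin.cycleRange j) _).symm
  have h2 : 2 * minLen ν = 2 * minLen ν' + 2 * (n - (j + 1)) := by
    rw [two_mul_minLen, hν']
    simp only [pairCost_add_pairCost_cycleRange hj hzero hrot, Finset.sum_add_distrib,
      Fin.sum_sum_ite_eq_and_lt, hcount]
    ring
  omega

lemma tr_foldr_cElt {d : ℕ} {ms : ℕ → ℕ} {ν : ℕ → Fin n → ℕ}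
    (hstep : ∀ k < d, StarStep (ms k) (ν k) (ν (k + 1))) (hd : ν d = 0) :
    ((List.ofFn fun k : Fin d => cElt n (ms k)).foldr mul (one n)).tr =
      fun i => -(ν 0 i : ℤ) := by
  induction d generalizing ms ν with
  | zero =>
    funext i
    simp [one, hd]
  | succ d ih =>
    rw [List.ofFn_succ, List.foldr_cons]
    exact (hstep 0 d.succ_pos).tr_mul_cElt
      (ih (ms := fun k => ms (k + 1)) (ν := fun k => ν (k + 1))
        (fun k hk => hstep (k + 1) (by omega)) hd)

lemma sum_len_cElt {d : ℕ} {ms : ℕ → ℕ} {ν : ℕ → Fin n → ℕ}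
    (hstep : ∀ k < d, StarStep (ms k) (ν k) (ν (k + 1))) (hd : ν d = 0) :
    ∑ k ∈ Finset.range d, len (cElt n (ms k)) = minLen (ν 0) := by
  induction d generalizing ms ν with
  | zero => simp [hd, minLen_zero]
  | succ d ih =>
    rw [Finset.sum_range_succ', (hstep 0 d.succ_pos).minLen_eq, (hstep 0 d.succ_pos).len_cElt,
      ih (ms := fun k => ms (k + 1)) (ν := fun k => ν (k + 1))
        (fun k hk => hstep (k + 1) (by omega)) hd, add_comm]

end AffW

open AffW in
/-- For a nonzero composition `μ ∈ ℕⁿ` with `d = |μ|`, iterating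
`ν ↦ ν* = (ν_m - 1, ν₁, …, ν_{m-1}, 0, …, 0)` (`m = l(ν)`) from `μ` down to `0`
produces lengths `m_d ≥ m_{d-1} ≥ ⋯ ≥ m₁` (here `ms k = m_{d-k}`), and
`c_{m_d} c_{m_{d-1}} ⋯ c_{m_1}` is a reduced decomposition of `m_{-μ}`, the
shortest element of the coset `t_{-μ}Sₙ`: the product has translation part
`-μ`, has minimal length in its coset, and its length is the sum of the lengths
of the factors. -/
theorem reduced_decomposition_of_min_coset_rep (n d : ℕ) (mu : Fin n → ℕ)
    (ms : ℕ → ℕ) (ν : ℕ → Fin n → ℕ)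
    (hnu0 : ν 0 = mu) (hnud : ν d = 0)
    (hstep : ∀ k, k < d → ∃ (hm1 : 1 ≤ ms k) (hmn : ms k ≤ n),
      (ν k ⟨ms k - 1, by omega⟩ ≠ 0) ∧
      (∀ i : Fin n, ms k ≤ (i : ℕ) → ν k i = 0) ∧
      (∀ i : Fin n, ν (k + 1) i =
        if (i : ℕ) = 0 then ν k ⟨ms k - 1, by omega⟩ - 1
        else if (i : ℕ) < ms k then
          ν k ⟨(i : ℕ) - 1, lt_of_le_of_lt (Nat.sub_le _ _) i.isLt⟩
        else 0)) :
    ((List.ofFn fun k : Fin d => cElt n (ms k)).foldr mul (one n)).tr =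
        (fun i => -(mu i : ℤ)) ∧
    (∀ u : Equiv.Perm (Fin n),
      len ((List.ofFn fun k : Fin d => cElt n (ms k)).foldr mul (one n)) ≤
        len (⟨u, fun i => -(mu i : ℤ)⟩ : AffW n)) ∧
    len ((List.ofFn fun k : Fin d => cElt n (ms k)).foldr mul (one n)) =
      ∑ k ∈ Finset.range d, len (cElt n (ms k)) := by
  have hstar : ∀ k < d, StarStep (ms k) (ν k) (ν (k + 1)) := fun k hk => by
    obtain ⟨hm1, hmn, hlast, hzero, hnext⟩ := hstep k hk
    exact starStep_of_forall_eq_ite hm1 hmn hlast hzero hnext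
  set w := (List.ofFn fun k : Fin d => cElt n (ms k)).foldr mul (one n)
  have htr : w.tr = fun i => -(mu i : ℤ) := hnu0 ▸ tr_foldr_cElt hstar hnud
  have hsum : ∑ k ∈ Finset.range d, len (cElt n (ms k)) = minLen mu :=
    hnu0 ▸ sum_len_cElt hstar hnud
  have hupper : len w ≤ minLen mu := by
    refine (len_foldr_mul_le _).trans (le_of_eq ?_)
    rw [← hsum, List.map_ofFn, List.sum_ofFn]
    exact Fin.sum_univ_eq_sum_range (fun k => len (cElt n (ms k))) d
  have hlower : minLen mu ≤ len w := by
    simpa [← htr] using minLen_le_len w.perm mu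
  refine ⟨htr, fun u => hupper.trans (minLen_le_len u mu), by omega⟩
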